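/- In the two-sided sequential matching model, assume every supplier is easy-to-match, i.e., each demand function Q_j : 2^N → [0,1] is monotone with Q_j(∅) = 0 and Q_j({i}) ≥ 1/2 for all i ∈ N, and assume consumers follow MNL models with scores satisfying 0 < v_ij < 1. Let (y*, w*, z*) be an optimal solution of the LP relaxation (9), set x_ij = y*_ij/w*_i, and let x̂ ∈ {0,1}^{N×V} be the random vector obtained by setting x̂_ij = 1 independently across all pairs (i,j) with probability x_ij, with induced random assortment family S_i = {j ∈ V : x̂_ij = 1}. Then E_{x̂}[E[M_{S_{x̂}}]] ≥ ((1 − 1/e)/4)·max over all assortment families S' = (S'_1,…,S'_n) of E[M_{S'}]. -/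

import Mathlib

/-- Expected revenue of the matching when the assortment family is `S`:
`E[M_S] = ∑_j r_j · E[Q_j(A_j^S)]`, where consumer `i` independently selects supplier `j`
with probability `pc i j (S i)`. -/
def expRev {ι κ : Type*} [Fintype ι] [Fintype κ] [DecidableEq ι]
    (pc : ι → κ → Finset κ → ℝ) (Q : κ → Finset ι → ℝ) (r : κ → ℝ)
    (S : ι → Finset κ) : ℝ :=
  ∑ j : κ, r j * ∑ A : Finset ι,
    Q j A * ((∏ i ∈ A, pc i j (S i)) * ∏ i ∈ Aᶜ, (1 - pc i j (S i)))

/-- Multinomial logit choice probabilities with scores `v`. -/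
noncomputable def pcMNL {ι κ : Type*} [DecidableEq κ] (v : ι → κ → ℝ) (i : ι) (j : κ)
    (S : Finset κ) : ℝ :=
  if j ∈ S then v i j / (1 + ∑ ℓ ∈ S, v i ℓ) else 0

/-!
Any assortment family `S` induces a feasible point of LP (9): `w_i = p_i(0, S_i)`,
`y_ij = w_i [j ∈ S_i]`, `z_j = min 1 (∑_i p_i(j, S_i))`. Since `Q_j ≤ 1` and `Q_j ∅ = 0`,
`E[Q_j(A_j^S)] ≤ P(A_j^S ≠ ∅) ≤ z_j`, so `E[M_S]` is at most the LP optimum.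

Conversely `Q_j ≥ 1/2` on nonempty sets gives `E[Q_j(A_j)] ≥ (1 - ∏_i (1 - p_i(j, S_i))) / 2`, and
averaging over the independent rounding factorises across consumers, replacing `p_i(j, S_i)` by
its mean `q_ij`. On the event `j ∈ S_i`, Cauchy–Schwarz bounds `E[1 / (1 + ∑_{ℓ ∈ S_i} v_iℓ)]`
below by the inverse of `E[1 + ∑_{ℓ ∈ S_i} v_iℓ | j ∈ S_i] ≤ 1 + v_ij + (1 - w_i) / w_i ≤ 2 / w_i`,
so `q_ij ≥ v_ij y_ij / 2`. Hence `∏_i (1 - q_ij) ≤ exp (-z_j / 2)`, and concavity of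
`u ↦ 1 - exp (-u)` on `[0, 1]` turns `(1 - exp (-z_j / 2)) / 2` into `(1 - 1/e) z_j / 4`.
-/

open Finset

section RandomSet

variable {α : Type*} [Fintype α] [DecidableEq α] (p : α → ℝ)

-- The law of the random subset containing each `a` independently with probability `p a`.
def randomSetProb (s : Finset α) : ℝ := (∏ a ∈ s, p a) * ∏ a ∈ sᶜ, (1 - p a)

variable {p}

lemma randomSetProb_nonneg (h0 : ∀ a, 0 ≤ p a) (h1 : ∀ a, p a ≤ 1) (s : Finset α) :
    0 ≤ randomSetProb p s :=
  mul_nonneg (prod_nonneg fun a _ ↦ h0 a) (prod_nonneg fun a _ ↦ sub_nonneg.2 (h1 a))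

variable (p)

lemma sum_randomSetProb_superset (s : Finset α) :
    ∑ t with s ⊆ t, randomSetProb p t = ∏ a ∈ s, p a := by
  have key : ∀ t : Finset α, (if s ⊆ t then randomSetProb p t else 0) =
      (∏ a ∈ t, p a) * ∏ a ∈ tᶜ, (if a ∈ s then 0 else 1 - p a) := by
    intro t
    split_ifs with hst
    · refine congrArg _ (prod_congr rfl fun a ha ↦ ?_)
      rw [if_neg fun has ↦ mem_compl.1 ha (hst has)]
    · obtain ⟨a, has, hat⟩ := not_subset.1 hst
      rw [prod_eq_zero (i := a) (mem_compl.2 hat) (by simp [has]), mul_zero]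
  rw [sum_filter, sum_congr rfl fun t _ ↦ key t, ← Fintype.prod_add, ← Fintype.prod_ite_mem s p]
  exact prod_congr rfl fun a _ ↦ by split_ifs <;> ring

lemma sum_randomSetProb : ∑ t, randomSetProb p t = 1 := by
  simpa using sum_randomSetProb_superset p ∅

lemma sum_randomSetProb_mul_sum_superset (s : Finset α) (v : α → ℝ) :
    ∑ t with s ⊆ t, randomSetProb p t * ∑ a ∈ t, v a =
      ∑ a, v a * ∏ b ∈ insert a s, p b := by
  have key : ∀ t : Finset α, (if s ⊆ t then randomSetProb p t * ∑ a ∈ t, v a else 0) =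
      ∑ a, if insert a s ⊆ t then v a * randomSetProb p t else 0 := by
    intro t
    simp only [insert_subset_iff]
    split_ifs with hst
    · rw [mul_sum, ← Fintype.sum_ite_mem]
      exact sum_congr rfl fun a _ ↦ by simp only [hst, and_true]; split_ifs <;> ring
    · simp [hst]
  rw [sum_filter, sum_congr rfl fun t _ ↦ key t, sum_comm]
  refine sum_congr rfl fun a _ ↦ ?_
  rw [← sum_randomSetProb_superset, mul_sum, sum_filter]

lemma sum_erase_empty_randomSetProb :
    ∑ t ∈ univ.erase ∅, randomSetProb p t = 1 - ∏ a, (1 - p a) := by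
  rw [sum_erase_eq_sub (mem_univ _), sum_randomSetProb]
  simp [randomSetProb]

end RandomSet

lemma one_sub_sum_le_prod_one_sub {ι : Type*} (s : Finset ι) {p : ι → ℝ}
    (h0 : ∀ i ∈ s, 0 ≤ p i) (h1 : ∀ i ∈ s, p i ≤ 1) :
    1 - ∑ i ∈ s, p i ≤ ∏ i ∈ s, (1 - p i) := by
  induction s using Finset.cons_induction with
  | empty => simp
  | cons a s ha ih =>
    rw [prod_cons, sum_cons]
    have ih := ih (fun i hi ↦ h0 i (mem_cons_of_mem hi)) (fun i hi ↦ h1 i (mem_cons_of_mem hi))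
    have hpa0 := h0 a (mem_cons_self a s)
    have hpa1 := h1 a (mem_cons_self a s)
    have hs0 : 0 ≤ ∑ i ∈ s, p i := sum_nonneg fun i hi ↦ h0 i (mem_cons_of_mem hi)
    nlinarith [mul_le_mul_of_nonneg_left ih (sub_nonneg.2 hpa1)]

section SetFunction

variable {α : Type*} [Fintype α] [DecidableEq α] {p : α → ℝ} {D : Finset α → ℝ}

lemma sum_mul_randomSetProb_eq_sum_erase_empty (hD : D ∅ = 0) :
    ∑ s, D s * randomSetProb p s = ∑ s ∈ univ.erase ∅, D s * randomSetProb p s :=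
  (sum_erase _ (by rw [hD, zero_mul])).symm

lemma mul_one_sub_prod_le_sum_mul_randomSetProb (h0 : ∀ a, 0 ≤ p a) (h1 : ∀ a, p a ≤ 1)
    (hD : D ∅ = 0) {c : ℝ} (hc : ∀ s : Finset α, s.Nonempty → c ≤ D s) :
    c * (1 - ∏ a, (1 - p a)) ≤ ∑ s, D s * randomSetProb p s := by
  rw [sum_mul_randomSetProb_eq_sum_erase_empty hD, ← sum_erase_empty_randomSetProb, mul_sum]
  refine sum_le_sum fun s hs ↦ mul_le_mul_of_nonneg_right ?_ (randomSetProb_nonneg h0 h1 s)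
  exact hc s (nonempty_iff_ne_empty.2 (ne_of_mem_erase hs))

lemma sum_mul_randomSetProb_le_min (h0 : ∀ a, 0 ≤ p a) (h1 : ∀ a, p a ≤ 1)
    (hD : D ∅ = 0) (hD1 : ∀ s, D s ≤ 1) :
    ∑ s, D s * randomSetProb p s ≤ min 1 (∑ a, p a) := by
  have hle : ∑ s, D s * randomSetProb p s ≤ 1 - ∏ a, (1 - p a) := by
    rw [sum_mul_randomSetProb_eq_sum_erase_empty hD, ← sum_erase_empty_randomSetProb]
    exact sum_le_sum fun s _ ↦ mul_le_of_le_one_left (randomSetProb_nonneg h0 h1 s) (hD1 s)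
  have hprod : 0 ≤ ∏ a, (1 - p a) := prod_nonneg fun a _ ↦ sub_nonneg.2 (h1 a)
  have hunion := one_sub_sum_le_prod_one_sub univ (fun a _ ↦ h0 a) (fun a _ ↦ h1 a)
  exact le_min (by linarith) (by linarith)

end SetFunction

section Independence

variable {ι β : Type*} [Fintype ι] [DecidableEq ι] [Fintype β]

lemma sum_pi_prod_mul_prod (μ f : ι → β → ℝ) :
    ∑ T : ι → β, (∏ i, μ i (T i)) * ∏ i, f i (T i) = ∏ i, ∑ b, μ i b * f i b := by
  simp_rw [← prod_mul_distrib]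
  exact (Fintype.prod_sum fun i b ↦ μ i b * f i b).symm

lemma sum_pi_prod_mul_one_sub_prod {μ : ι → β → ℝ} (hμ : ∀ i, ∑ b, μ i b = 1) (f : ι → β → ℝ) :
    ∑ T : ι → β, (∏ i, μ i (T i)) * (1 - ∏ i, (1 - f i (T i))) =
      1 - ∏ i, (1 - ∑ b, μ i b * f i b) := by
  have hμ' : ∀ i, 1 - ∑ b, μ i b * f i b = ∑ b, μ i b * (1 - f i b) := fun i ↦ by
    simp [mul_sub, sum_sub_distrib, hμ i]
  have hμT : ∑ T : ι → β, ∏ i, μ i (T i) = 1 := by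
    rw [← Fintype.prod_sum μ]
    exact prod_eq_one fun i _ ↦ hμ i
  rw [prod_congr rfl fun i _ ↦ hμ' i, ← sum_pi_prod_mul_prod]
  simp_rw [mul_sub, mul_one, sum_sub_distrib, hμT]

end Independence

section MNL

variable {ι κ : Type*} {v : ι → κ → ℝ} {i : ι}

lemma one_add_sum_pos (hv : ∀ ℓ, 0 ≤ v i ℓ) (S : Finset κ) : 0 < 1 + ∑ ℓ ∈ S, v i ℓ :=
  add_pos_of_pos_of_nonneg one_pos (sum_nonneg fun ℓ _ ↦ hv ℓ)

variable [DecidableEq κ]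

lemma pcMNL_nonneg (hv : ∀ ℓ, 0 ≤ v i ℓ) (j : κ) (S : Finset κ) : 0 ≤ pcMNL v i j S := by
  unfold pcMNL
  split_ifs
  exacts [div_nonneg (hv j) (one_add_sum_pos hv S).le, le_rfl]

lemma pcMNL_le_one (hv : ∀ ℓ, 0 ≤ v i ℓ) (j : κ) (S : Finset κ) : pcMNL v i j S ≤ 1 := by
  unfold pcMNL
  split_ifs with hj
  · rw [div_le_one (one_add_sum_pos hv S)]
    linarith [single_le_sum (fun ℓ _ ↦ hv ℓ) hj]
  · exact zero_le_one

lemma inv_one_add_sum_add_sum_pcMNL [Fintype κ] (hv : ∀ ℓ, 0 ≤ v i ℓ) (S : Finset κ) :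
    (1 + ∑ ℓ ∈ S, v i ℓ)⁻¹ + ∑ j, pcMNL v i j S = 1 := by
  have hpos := one_add_sum_pos hv S
  have hsum : ∑ j, pcMNL v i j S = (∑ j ∈ S, v i j) / (1 + ∑ ℓ ∈ S, v i ℓ) := by
    rw [sum_div, ← Fintype.sum_ite_mem S]
    rfl
  rw [hsum]
  field_simp

end MNL

section Consumer

variable {κ : Type*} [Fintype κ] [DecidableEq κ] {x : κ → ℝ} {w : ℝ}

lemma sum_randomSetProb_mul_one_add_sum_le {v : κ → ℝ} (hv0 : ∀ ℓ, 0 ≤ v ℓ)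
    (hv1 : ∀ ℓ, v ℓ ≤ 1) (hx0 : ∀ ℓ, 0 ≤ x ℓ) (hw0 : 0 < w)
    (hw : w * (1 + ∑ ℓ, v ℓ * x ℓ) ≤ 1) (j : κ) :
    ∑ t with j ∈ t, randomSetProb x t * (1 + ∑ ℓ ∈ t, v ℓ) ≤ 2 * x j / w := by
  have hpair : ∀ ℓ, ∏ b ∈ insert ℓ {j}, x b ≤ x j * x ℓ + if ℓ = j then x j else 0 := by
    intro ℓ
    by_cases h : ℓ = j
    · subst h
      simp only [insert_eq_of_mem (mem_singleton_self ℓ), prod_singleton, if_true]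
      nlinarith [hx0 ℓ]
    · rw [prod_insert (by simpa using h), prod_singleton, if_neg h]
      linarith
  have hcross : ∑ ℓ, v ℓ * ∏ b ∈ insert ℓ {j}, x b ≤ x j * ∑ ℓ, v ℓ * x ℓ + x j * v j :=
    calc ∑ ℓ, v ℓ * ∏ b ∈ insert ℓ {j}, x b
        ≤ ∑ ℓ, v ℓ * (x j * x ℓ + if ℓ = j then x j else 0) :=
          sum_le_sum fun ℓ _ ↦ mul_le_mul_of_nonneg_left (hpair ℓ) (hv0 ℓ)
      _ = x j * ∑ ℓ, v ℓ * x ℓ + x j * v j := by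
          simp only [mul_add, sum_add_distrib, mul_sum, mul_ite, mul_zero, sum_ite_eq',
            mem_univ, if_true]
          exact congrArg₂ (· + ·) (sum_congr rfl fun ℓ _ ↦ by ring) (mul_comm _ _)
  have hS : 0 ≤ ∑ ℓ, v ℓ * x ℓ := sum_nonneg fun ℓ _ ↦ mul_nonneg (hv0 ℓ) (hx0 ℓ)
  simp_rw [← singleton_subset_iff]
  rw [sum_congr rfl fun t _ ↦ mul_one_add (randomSetProb x t) _, sum_add_distrib,
    sum_randomSetProb_superset, sum_randomSetProb_mul_sum_superset, prod_singleton,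
    le_div_iff₀ hw0]
  nlinarith [mul_le_mul_of_nonneg_left hw (hx0 j), mul_le_mul_of_nonneg_left (hv1 j) (hx0 j),
    mul_nonneg (hx0 j) hS, mul_nonneg (hx0 j) (hv0 j)]

lemma mul_le_sum_randomSetProb_mul_pcMNL {ι : Type*} {v : ι → κ → ℝ} {i : ι}
    (hv0 : ∀ ℓ, 0 ≤ v i ℓ) (hv1 : ∀ ℓ, v i ℓ ≤ 1) (hx0 : ∀ ℓ, 0 ≤ x ℓ) (hx1 : ∀ ℓ, x ℓ ≤ 1)
    (hw0 : 0 < w) (hw : w * (1 + ∑ ℓ, v i ℓ * x ℓ) ≤ 1) (j : κ) :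
    v i j * (x j * w) / 2 ≤ ∑ t, randomSetProb x t * pcMNL v i j t := by
  set D : Finset κ → ℝ := fun t ↦ 1 + ∑ ℓ ∈ t, v i ℓ
  have hD : ∀ t, 0 < D t := one_add_sum_pos hv0
  have hP : ∀ t, 0 ≤ randomSetProb x t := randomSetProb_nonneg hx0 hx1
  set E := ∑ t with j ∈ t, randomSetProb x t / D t
  have hE0 : 0 ≤ E := sum_nonneg fun t _ ↦ div_nonneg (hP t) (hD t).le
  have hexp : ∑ t, randomSetProb x t * pcMNL v i j t = v i j * E := by
    rw [mul_sum, sum_filter]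
    refine sum_congr rfl fun t _ ↦ ?_
    unfold pcMNL
    split_ifs <;> ring
  have hmass : ∑ t with j ∈ t, randomSetProb x t = x j := by
    simpa [singleton_subset_iff] using sum_randomSetProb_superset x {j}
  -- Cauchy–Schwarz, i.e. Jensen for `1 / D` on the event `j ∈ t`.
  have hCS : x j ^ 2 ≤ (∑ t with j ∈ t, randomSetProb x t * D t) * E := by
    rw [← hmass]
    refine sum_sq_le_sum_mul_sum_of_sq_le_mul _ (fun t _ ↦ mul_nonneg (hP t) (hD t).le)
      (fun t _ ↦ div_nonneg (hP t) (hD t).le) fun t _ ↦ le_of_eq ?_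
    field_simp [(hD t).ne']
  have hB := sum_randomSetProb_mul_one_add_sum_le hv0 hv1 hx0 hw0 hw j
  have hxE : x j * w / 2 ≤ E := by
    rcases (hx0 j).eq_or_lt with hxj | hxj
    · rw [← hxj]; simpa using hE0
    · have : x j ^ 2 ≤ 2 * x j / w * E := hCS.trans (mul_le_mul_of_nonneg_right hB hE0)
      rw [div_mul_eq_mul_div, le_div_iff₀ hw0] at this
      nlinarith
  rw [hexp]
  nlinarith [mul_le_mul_of_nonneg_left hxE (hv0 j)]

end Consumer

lemma prod_one_sub_le_exp_neg_sum {ι : Type*} (s : Finset ι) {q : ι → ℝ}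
    (hq : ∀ i ∈ s, q i ≤ 1) : ∏ i ∈ s, (1 - q i) ≤ Real.exp (-∑ i ∈ s, q i) := by
  rw [← sum_neg_distrib, Real.exp_sum]
  exact prod_le_prod (fun i hi ↦ sub_nonneg.2 (hq i hi)) fun i _ ↦ Real.one_sub_le_exp_neg (q i)

lemma one_sub_inv_exp_one_mul_le_one_sub_exp_neg {u : ℝ} (h0 : 0 ≤ u) (h1 : u ≤ 1) :
    (1 - (Real.exp 1)⁻¹) * u ≤ 1 - Real.exp (-u) := by
  have h := convexOn_exp.2 (Set.mem_univ 0) (Set.mem_univ (-1)) (sub_nonneg.2 h1) h0 (by ring)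
  simp only [smul_eq_mul, mul_zero, zero_add, mul_neg, mul_one, Real.exp_zero,
    Real.exp_neg] at h
  rw [Real.exp_neg]
  linarith

lemma one_sub_inv_exp_one_nonneg : 0 ≤ 1 - (Real.exp 1)⁻¹ :=
  sub_nonneg.2 (inv_le_one_of_one_le₀ (Real.one_le_exp zero_le_one))

lemma mul_le_half_one_sub_exp_neg {z s : ℝ} (hz : z ≤ 1) (hzs : z ≤ 2 * s) (hs : 0 ≤ s) :
    (1 - (Real.exp 1)⁻¹) / 4 * z ≤ (1 - Real.exp (-s)) / 2 := by
  have he := one_sub_inv_exp_one_nonneg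
  have hexp : Real.exp (-s) ≤ 1 := Real.exp_le_one_iff.2 (neg_nonpos.2 hs)
  rcases le_or_gt z 0 with hz0 | hz0
  · nlinarith
  · have hu := one_sub_inv_exp_one_mul_le_one_sub_exp_neg (u := z / 2) (by linarith) (by linarith)
    have hmono : Real.exp (-s) ≤ Real.exp (-(z / 2)) := Real.exp_le_exp.2 (by linarith)
    nlinarith

section Rounding

variable {ι κ : Type*} [Fintype ι] [DecidableEq ι] [Fintype κ]

lemma sum_mul_expRev (μ : (ι → Finset κ) → ℝ) (pc : ι → κ → Finset κ → ℝ)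
    (Q : κ → Finset ι → ℝ) (r : κ → ℝ) :
    ∑ T, μ T * expRev pc Q r T =
      ∑ j, r j * ∑ T, μ T * ∑ A, Q j A * randomSetProb (fun i ↦ pc i j (T i)) A := by
  simp_rw [expRev, mul_sum]
  rw [sum_comm]
  refine sum_congr rfl fun j _ ↦ sum_congr rfl fun T _ ↦ sum_congr rfl fun A _ ↦ ?_
  unfold randomSetProb
  ring

lemma rounding_probs_of_lp_row {v y : κ → ℝ} {w : ℝ} (hw : w + ∑ j, v j * y j = 1)
    (hy : ∀ j, 0 ≤ y j ∧ y j ≤ w) :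
    0 < w ∧ (∀ j, 0 ≤ y j / w) ∧ (∀ j, y j / w ≤ 1) ∧ w * (1 + ∑ j, v j * (y j / w)) ≤ 1 := by
  have hw0 : 0 < w := by
    by_contra! h
    have hy0 : ∀ j, y j = 0 := fun j ↦ le_antisymm ((hy j).2.trans h) (hy j).1
    simp only [hy0, mul_zero, sum_const_zero, add_zero] at hw
    linarith
  refine ⟨hw0, fun j ↦ div_nonneg (hy j).1 hw0.le, fun j ↦ div_le_one_of_le₀ (hy j).2 hw0.le,
    (le_of_eq ?_)⟩
  calc w * (1 + ∑ j, v j * (y j / w)) = w + ∑ j, v j * y j := by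
        rw [mul_one_add, mul_sum]
        exact congrArg _ (sum_congr rfl fun j _ ↦ by field_simp)
    _ = 1 := hw

variable [DecidableEq κ] {v : ι → κ → ℝ}

lemma exists_lp_feasible_expRev_le (hv : ∀ i j, 0 ≤ v i j) {Q : κ → Finset ι → ℝ}
    (hQ0 : ∀ j, Q j ∅ = 0) (hQ1 : ∀ j A, Q j A ≤ 1) {r : κ → ℝ} (hr : ∀ j, 0 ≤ r j)
    (S : ι → Finset κ) :
    ∃ (y : ι → κ → ℝ) (w : ι → ℝ) (z : κ → ℝ),
      (∀ j, z j ≤ 1) ∧ (∀ j, z j ≤ ∑ i, v i j * y i j) ∧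
      (∀ i, w i + ∑ j, v i j * y i j = 1) ∧ (∀ i j, 0 ≤ y i j ∧ y i j ≤ w i) ∧
      expRev (pcMNL v) Q r S ≤ ∑ j, r j * z j := by
  set w : ι → ℝ := fun i ↦ (1 + ∑ ℓ ∈ S i, v i ℓ)⁻¹
  have hw0 : ∀ i, 0 ≤ w i := fun i ↦ (inv_pos.2 (one_add_sum_pos (hv i) (S i))).le
  have hvy : ∀ i j, v i j * (if j ∈ S i then w i else 0) = pcMNL v i j (S i) := by
    intro i j
    unfold pcMNL
    split_ifs <;> simp [w, div_eq_mul_inv]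
  refine ⟨fun i j ↦ if j ∈ S i then w i else 0, w, fun j ↦ min 1 (∑ i, pcMNL v i j (S i)),
    fun j ↦ min_le_left _ _, fun j ↦ by simpa only [hvy] using min_le_right _ _,
    fun i ↦ by simpa only [hvy] using inv_one_add_sum_add_sum_pcMNL (hv i) (S i),
    fun i j ↦ by dsimp only; split_ifs <;> simp [hw0 i], ?_⟩
  exact sum_le_sum fun j _ ↦ mul_le_mul_of_nonneg_left
    (sum_mul_randomSetProb_le_min (fun i ↦ pcMNL_nonneg (hv i) j (S i))
      (fun i ↦ pcMNL_le_one (hv i) j (S i)) (hQ0 j) (hQ1 j)) (hr j)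

lemma mul_le_sum_randomSetProb_mul_expected_demand {y : ι → κ → ℝ} {w : ι → ℝ}
    (hv0 : ∀ i j, 0 ≤ v i j) (hv1 : ∀ i j, v i j ≤ 1)
    (hw : ∀ i, w i + ∑ j, v i j * y i j = 1) (hy : ∀ i j, 0 ≤ y i j ∧ y i j ≤ w i)
    {D : Finset ι → ℝ} (hD0 : D ∅ = 0) (hD : ∀ A : Finset ι, A.Nonempty → 1 / 2 ≤ D A)
    (j : κ) {z : ℝ} (hz1 : z ≤ 1) (hz2 : z ≤ ∑ i, v i j * y i j) :
    (1 - (Real.exp 1)⁻¹) / 4 * z ≤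
      ∑ T : ι → Finset κ, (∏ i, randomSetProb (fun ℓ ↦ y i ℓ / w i) (T i)) *
        ∑ A, D A * randomSetProb (fun i ↦ pcMNL v i j (T i)) A := by
  choose hw0 hx0 hx1 hwx using fun i ↦ rounding_probs_of_lp_row (hw i) (hy i)
  set x : ι → κ → ℝ := fun i ℓ ↦ y i ℓ / w i
  set q : ι → ℝ := fun i ↦ ∑ t, randomSetProb (x i) t * pcMNL v i j t
  have hP : ∀ i t, 0 ≤ randomSetProb (x i) t := fun i ↦ randomSetProb_nonneg (hx0 i) (hx1 i)
  have hq0 : 0 ≤ ∑ i, q i :=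
    sum_nonneg fun i _ ↦ sum_nonneg fun t _ ↦ mul_nonneg (hP i t) (pcMNL_nonneg (hv0 i) j t)
  have hq1 : ∀ i, q i ≤ 1 := fun i ↦ calc
    q i ≤ ∑ t, randomSetProb (x i) t :=
      sum_le_sum fun t _ ↦ mul_le_of_le_one_right (hP i t) (pcMNL_le_one (hv0 i) j t)
    _ = 1 := sum_randomSetProb _
  have hzq : z ≤ 2 * ∑ i, q i := by
    rw [mul_sum]
    refine hz2.trans (sum_le_sum fun i _ ↦ ?_)
    have hqi := mul_le_sum_randomSetProb_mul_pcMNL (hv0 i) (hv1 i) (hx0 i) (hx1 i) (hw0 i)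
      (hwx i) j
    rw [div_mul_cancel₀ _ (hw0 i).ne'] at hqi
    linarith
  calc (1 - (Real.exp 1)⁻¹) / 4 * z
      ≤ (1 - Real.exp (-∑ i, q i)) / 2 := mul_le_half_one_sub_exp_neg hz1 hzq hq0
    _ ≤ 1 / 2 * (1 - ∏ i, (1 - q i)) := by
        linarith [prod_one_sub_le_exp_neg_sum univ fun i _ ↦ hq1 i]
    _ = 1 / 2 * ∑ T : ι → Finset κ, (∏ i, randomSetProb (x i) (T i)) *
          (1 - ∏ i, (1 - pcMNL v i j (T i))) := by
        rw [sum_pi_prod_mul_one_sub_prod fun i ↦ sum_randomSetProb (x i)]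
    _ ≤ _ := by
        rw [mul_sum]
        refine sum_le_sum fun T _ ↦ ?_
        rw [mul_left_comm]
        exact mul_le_mul_of_nonneg_left
          (mul_one_sub_prod_le_sum_mul_randomSetProb (fun i ↦ pcMNL_nonneg (hv0 i) j (T i))
            (fun i ↦ pcMNL_le_one (hv0 i) j (T i)) hD0 hD)
          (prod_nonneg fun i _ ↦ hP i (T i))

end Rounding

/-- **Theorem 3.4.** With easy-to-match suppliers and MNL consumers with
scores `v_{ij} < 1`, rounding an optimal solution of the LP relaxation (9) by independent
randomized rounding yields a random assortment family whose expected revenue (in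
expectation over the rounding) is at least `((1 − 1/e)/4)·OPT`. -/
theorem mnl_unconstrained_approximation
    {ι κ : Type*} [Fintype ι] [Fintype κ] [DecidableEq ι] [DecidableEq κ]
    (v : ι → κ → ℝ) (hv : ∀ i j, 0 < v i j ∧ v i j < 1)
    (Q : κ → Finset ι → ℝ)
    (hQrange : ∀ j A, Q j A ∈ Set.Icc (0 : ℝ) 1)
    (hQ0 : ∀ j, Q j ∅ = 0)
    (hQmono : ∀ j (A B : Finset ι), A ⊆ B → Q j A ≤ Q j B)
    (heasy : ∀ (j : κ) (i : ι), 1 / 2 ≤ Q j {i})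
    (r : κ → ℝ) (hr : ∀ j, 0 ≤ r j)
    (ystar : ι → κ → ℝ) (wstar : ι → ℝ) (zstar : κ → ℝ)
    -- `(ystar, wstar, zstar)` is feasible for LP (9)
    (hz1 : ∀ j, zstar j ≤ 1)
    (hz2 : ∀ j, zstar j ≤ ∑ i : ι, v i j * ystar i j)
    (hw : ∀ i, wstar i + ∑ j : κ, v i j * ystar i j = 1)
    (hybounds : ∀ i j, 0 ≤ ystar i j ∧ ystar i j ≤ wstar i)
    -- and optimal for LP (9)
    (hopt : ∀ (y : ι → κ → ℝ) (w : ι → ℝ) (z : κ → ℝ),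
      (∀ j, z j ≤ 1) →
      (∀ j, z j ≤ ∑ i : ι, v i j * y i j) →
      (∀ i, w i + ∑ j : κ, v i j * y i j = 1) →
      (∀ i j, 0 ≤ y i j ∧ y i j ≤ w i) →
      ∑ j : κ, r j * z j ≤ ∑ j : κ, r j * zstar j) :
    -- expected revenue over the independent randomized rounding, where `x̂_{ij} = 1`
    -- independently with probability `x_{ij} = ystar_{ij} / wstar_i`
    ∀ S' : ι → Finset κ,
      ((1 - (Real.exp 1)⁻¹) / 4) * expRev (pcMNL v) Q r S' ≤
        ∑ T : ι → Finset κ,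
          (∏ i : ι, ((∏ j ∈ T i, ystar i j / wstar i) *
            ∏ j ∈ (T i)ᶜ, (1 - ystar i j / wstar i))) *
          expRev (pcMNL v) Q r T := by
  intro S'
  obtain ⟨y, w, z, hz1', hz2', hw', hy', hS'⟩ :=
    exists_lp_feasible_expRev_le (fun i j ↦ (hv i j).1.le) hQ0 (fun j A ↦ (hQrange j A).2) hr S'
  have hD : ∀ j (A : Finset ι), A.Nonempty → 1 / 2 ≤ Q j A := fun j A ⟨i, hi⟩ ↦
    (heasy j i).trans (hQmono j _ _ (singleton_subset_iff.2 hi))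
  calc (1 - (Real.exp 1)⁻¹) / 4 * expRev (pcMNL v) Q r S'
      ≤ (1 - (Real.exp 1)⁻¹) / 4 * ∑ j, r j * zstar j :=
        mul_le_mul_of_nonneg_left (hS'.trans (hopt y w z hz1' hz2' hw' hy'))
          (div_nonneg one_sub_inv_exp_one_nonneg zero_le_four)
    _ = ∑ j, r j * ((1 - (Real.exp 1)⁻¹) / 4 * zstar j) := by
        rw [mul_sum]; exact sum_congr rfl fun j _ ↦ by ring
    _ ≤ _ := sum_le_sum fun j _ ↦ mul_le_mul_of_nonneg_left
          (mul_le_sum_randomSetProb_mul_expected_demand (fun i j ↦ (hv i j).1.le)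
            (fun i j ↦ (hv i j).2.le) hw hybounds (hQ0 j) (hD j) j (hz1 j) (hz2 j)) (hr j)
    _ = _ := (sum_mul_expRev _ _ _ _).symm
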